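/- Let D be the distance matrix of the complete m-partite graph K_{n₁,...,n_m} on N = Σ nᵢ vertices. Then the sum of all cofactors of D equals (-2)^{N-m} · Σ_{i=1}^m ( nᵢ · Π_{j≠i} (nⱼ - 2) ). -/

import Mathlib

/-!
Adding the all-ones matrix `J = vecMulVec 1 1` is a rank-one update, so the matrix determinant
lemma `det (A + u vᵀ) = det A + vᵀ (adj A) u` gives `cof D = det (D + J) - det D`.
Both `D` and `D + J` are of the form `B - 2 I`, where `B` is the blow-up along the parts of an
`m × m` matrix `I + c J`. Writing `B = U M Uᵀ` with `U` the vertex–part incidence matrix and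
`Uᵀ U = diag n`, Sylvester's determinant identity reduces `det (B - x I)` to
`(-x) ^ (N - m) * det (M diag n - x I)`, and `M diag n - x I` is again diagonal plus rank one.
-/

open Finset Matrix

namespace Matrix

variable {R ι : Type*} [CommRing R] [Fintype ι] [DecidableEq ι]

theorem det_add_vecMulVec_single (A : Matrix ι ι R) (a : ι) (c : R) (v : ι → R) :
    (A + vecMulVec (Pi.single a c) v).det = A.det + c * (A.updateRow a v).det := by
  have hrow : A + vecMulVec (Pi.single a c) v = A.updateRow a (A a + c • v) := by
    ext i j
    obtain rfl | hi := eq_or_ne i a <;> simp [vecMulVec_apply, *]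
  rw [hrow, det_updateRow_add, det_updateRow_smul, updateRow_eq_self]

theorem det_add_vecMulVec_eq_add_sum_det_updateRow (A : Matrix ι ι R) (u v : ι → R) :
    (A + vecMulVec u v).det = A.det + ∑ p, u p * (A.updateRow p v).det := by
  suffices h : ∀ (s : Finset ι) (A : Matrix ι ι R),
      (A + vecMulVec (∑ p ∈ s, Pi.single p (u p)) v).det
        = A.det + ∑ p ∈ s, u p * (A.updateRow p v).det by
    simpa only [Finset.univ_sum_single] using h univ A
  intro s
  induction s using Finset.induction_on with
  | empty => simp
  | insert a s ha ih =>
    intro A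
    have hrows : ∀ p ∈ s, (A + vecMulVec (Pi.single a (u a)) v).updateRow p v
        = A.updateRow p v + vecMulVec (Pi.single a (u a)) v := by
      intro p hp
      have hpa : p ≠ a := ne_of_mem_of_not_mem hp ha
      ext i j
      obtain rfl | hi := eq_or_ne i p <;> simp [vecMulVec_apply, updateRow_apply, *]
    have hvanish : ∀ p ∈ s, ((A.updateRow p v).updateRow a v).det = 0 := fun p hp =>
      det_zero_of_row_eq (ne_of_mem_of_not_mem hp ha) (by simp [ne_of_mem_of_not_mem hp ha])
    rw [sum_insert ha, add_vecMulVec, ← add_assoc, ih,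
      det_add_vecMulVec_single, sum_insert ha, add_assoc]
    congr 2
    refine sum_congr rfl fun p hp => ?_
    rw [hrows p hp, det_add_vecMulVec_single, hvanish p hp, mul_zero, add_zero]

theorem det_add_vecMulVec (A : Matrix ι ι R) (u v : ι → R) :
    (A + vecMulVec u v).det = A.det + v ⬝ᵥ A.adjugate *ᵥ u := by
  rw [det_add_vecMulVec_eq_add_sum_det_updateRow, dotProduct_mulVec, dotProduct_comm,
    ← mulVec_transpose, adjugate_transpose, ← cramer_eq_adjugate_mulVec, dotProduct]
  simp only [cramer_transpose_apply]

theorem det_diagonal_add_vecMulVec (d u v : ι → R) :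
    (diagonal d + vecMulVec u v).det
      = ∏ i, d i + ∑ i, v i * u i * ∏ j ∈ univ.erase i, d j := by
  rw [det_add_vecMulVec, det_diagonal, adjugate_diagonal, dotProduct]
  simp only [mulVec_diagonal]
  congr 1
  exact sum_congr rfl fun i _ => by ring

section Blowup

open Polynomial

variable {κ : Type*} [Fintype κ] [DecidableEq κ] (n : κ → ℕ)

theorem charpoly_submatrix_sigmaFst (M : Matrix κ κ R) (hle : Fintype.card κ ≤ ∑ i, n i) :
    (M.submatrix (Sigma.fst : (Σ i, Fin (n i)) → κ) Sigma.fst).charpoly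
      = X ^ (∑ i, n i - Fintype.card κ) * (M * diagonal fun i => (n i : R)).charpoly := by
  set U : Matrix (Σ i, Fin (n i)) κ R := (1 : Matrix κ κ R).submatrix Sigma.fst id
  have hM : M.submatrix Sigma.fst Sigma.fst = U * (M * Uᵀ) := by
    ext p q; simp [U, mul_apply, one_apply]
  have hUU : Uᵀ * U = diagonal fun i => (n i : R) := by
    ext i j
    obtain rfl | hij := eq_or_ne i j <;>
      simp [U, mul_apply, one_apply, Fintype.sum_sigma, *]
  rw [hM, charpoly_mul_comm_of_le _ _ (by simpa using hle), Matrix.mul_assoc, hUU,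
    Fintype.card_sigma]
  simp only [Fintype.card_fin]

theorem det_submatrix_sigmaFst_sub_scalar (M : Matrix κ κ R) (x : R)
    (hle : Fintype.card κ ≤ ∑ i, n i) :
    (M.submatrix (Sigma.fst : (Σ i, Fin (n i)) → κ) Sigma.fst - scalar _ x).det
      = (-x) ^ (∑ i, n i - Fintype.card κ) *
        (M * diagonal (fun i => (n i : R)) - scalar κ x).det := by
  have key := congrArg (eval x) (charpoly_submatrix_sigmaFst n M hle)
  rw [eval_charpoly, eval_mul, eval_charpoly, eval_pow, eval_X] at key
  obtain ⟨k, hk⟩ := Nat.exists_eq_add_of_le hle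
  rw [← neg_sub, det_neg, key, ← neg_sub (M * _), det_neg, Fintype.card_sigma]
  simp only [Fintype.card_fin, hk, Nat.add_sub_cancel_left]
  generalize (_ - scalar κ x).det = d
  have hsq : ((-1 : R) ^ Fintype.card κ) * (-1) ^ Fintype.card κ = 1 := by
    rw [← mul_pow]; norm_num
  rw [pow_add, neg_pow x]
  linear_combination ((-1) ^ k * x ^ k * d) * hsq

theorem det_submatrix_sigmaFst_one_add_const_sub_scalar (c x : R)
    (hle : Fintype.card κ ≤ ∑ i, n i) :
    ((1 + of fun _ _ => c : Matrix κ κ R).submatrix (Sigma.fst : (Σ i, Fin (n i)) → κ) Sigma.fst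
        - scalar _ x).det
      = (-x) ^ (∑ i, n i - Fintype.card κ) *
        (∏ i, ((n i : R) - x) + c * ∑ i, (n i : R) * ∏ j ∈ univ.erase i, ((n j : R) - x)) := by
  have hsmall : (1 + of fun _ _ => c) * diagonal (fun i => (n i : R)) - scalar κ x
      = diagonal (fun i => (n i : R) - x) + vecMulVec (fun _ => c) (fun i => (n i : R)) := by
    ext i j
    obtain rfl | hij := eq_or_ne i j
    · simp [add_mul, vecMulVec_apply]
      ring
    · simp [add_mul, vecMulVec_apply, hij]
  rw [det_submatrix_sigmaFst_sub_scalar n _ x hle, hsmall, det_diagonal_add_vecMulVec, mul_sum]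
  congr 2
  exact sum_congr rfl fun i _ => by ring

end Blowup

end Matrix

theorem stmt1_general (m : ℕ) (n : Fin m → ℕ) (hn : ∀ i, 1 ≤ n i)
    (D : Matrix ((i : Fin m) × Fin (n i)) ((i : Fin m) × Fin (n i)) ℝ)
    (hD : ∀ u v, D u v = if u = v then 0 else if u.1 = v.1 then 2 else 1) :
    ∑ u, ∑ v, D.adjugate u v =
      (-2 : ℝ) ^ ((∑ i, n i) - m) *
        ∑ i : Fin m, (n i : ℝ) * ∏ j ∈ Finset.univ.erase i, ((n j : ℝ) - 2) := by
  have hle : Fintype.card (Fin m) ≤ ∑ i, n i := by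
    simpa using sum_le_sum (s := univ) fun i _ => hn i
  have hcof : ∑ u, ∑ v, D.adjugate u v = (D + vecMulVec 1 1).det - D.det := by
    rw [det_add_vecMulVec]
    simp [dotProduct, mulVec]
  have hD₁ : D = (1 + of fun _ _ => (1 : ℝ)).submatrix Sigma.fst Sigma.fst - scalar _ 2 := by
    ext u v
    rw [hD]
    split_ifs with huv h <;> simp [one_apply, *] <;> norm_num
  have hD₂ : D + vecMulVec 1 1
      = (1 + of fun _ _ => (2 : ℝ)).submatrix Sigma.fst Sigma.fst - scalar _ 2 := by
    ext u v
    rw [Matrix.add_apply, hD]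
    split_ifs with huv h <;> simp [one_apply, vecMulVec_apply, *] <;> norm_num
  rw [hcof, hD₂, det_submatrix_sigmaFst_one_add_const_sub_scalar n _ _ hle, hD₁,
    det_submatrix_sigmaFst_one_add_const_sub_scalar n _ _ hle, Fintype.card_fin]
  ring

theorem stmt1 (m : ℕ) (hm : 2 ≤ m) (n : Fin m → ℕ) (hn : ∀ i, 1 ≤ n i)
    (D : Matrix ((i : Fin m) × Fin (n i)) ((i : Fin m) × Fin (n i)) ℝ)
    (hD : ∀ u v, D u v = if u = v then 0 else if u.1 = v.1 then 2 else 1) :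
    ∑ u, ∑ v, D.adjugate u v =
      (-2 : ℝ) ^ ((∑ i, n i) - m) *
        ∑ i : Fin m, (n i : ℝ) * ∏ j ∈ Finset.univ.erase i, ((n j : ℝ) - 2) :=
  stmt1_general m n hn D hD
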